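/- arXiv:1901.05328 — 2 statements merged into one kernel-verified Lean document; each statement's English description precedes it below -/
import Mathlib

section
/- Let f(t) = ∑_{n≥0} P_n(z,q) t^n be the formal power series defined by f(t) = ∑_{j=0}^{∞} t^{2j}(1+t) q^{2j²} (tzq;q²)_j (tq/z;q²)_j / (t²;q²)_{2j+1}. Then for n ≥ 4 the coefficients satisfy the fourth-order recurrence P_n = (1-q²)P_{n-1} + (2q² + q^{2n-2})P_{n-2} + (q⁴ - q² - (z + z⁻¹)q^{2n-3})P_{n-3} + (q^{2n-4} - q⁴)P_{n-4}. -/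
open Finset PowerSeries

/-!
Write `T_j` for the `j`-th summand of `f`. Shifting `j` by one multiplies the numerator
products by one factor each and the denominator by two, which gives
`(1-t)(1+q²t)(1-q²t²) T_{j+1}(t) = q²t²(1-zqt)(1-qt/z) T_j(q²t)`, while `(1-t) T_0 = 1`.
Summing, `f` satisfies the `q`-difference equation
`(1-t)(1+q²t)(1-q²t²) f(t) = (1+q²t)(1-q²t²) + q²t²(1-zqt)(1-qt/z) f(q²t)`,
and since `f(q²t)` has coefficients `q^{2k} P_k`, comparing coefficients of `t^n` is the
recurrence. Only finitely many `T_j` affect a given coefficient, so we work with the partial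
sums `∑_{j ≤ n} T_j`, which satisfy the same equation with `f(q²t)` replaced by the partial
sum of one order less.
-/

/-- The `j`-th term of the series
`f(t) = ∑_j t^{2j}(1+t) q^{2j²} (tzq;q²)_j (tq/z;q²)_j / (t²;q²)_{2j+1}`,
as a formal power series in `t` over the field `K` (think of `K = ℚ(z,q)`). -/
noncomputable def fTerm {K : Type*} [Field K] (z q : K) (j : ℕ) : PowerSeries K :=
  (PowerSeries.X : PowerSeries K) ^ (2*j) * (1 + PowerSeries.X)
    * PowerSeries.C (q ^ (2*j^2))
    * (∏ k ∈ range j, (1 - PowerSeries.X * PowerSeries.C (z * q ^ (2*k+1))))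
    * (∏ k ∈ range j, (1 - PowerSeries.X * PowerSeries.C (q ^ (2*k+1) / z)))
    * (∏ k ∈ range (2*j+1), (1 - PowerSeries.X ^ 2 * PowerSeries.C (q ^ (2*k))))⁻¹

/-- `P n = P_n(z,q)`, the coefficient of `t^n` in `f(t)`.  Since the `j`-th term of
`f` is divisible by `t^{2j}`, only the terms with `j ≤ n` contribute to the
coefficient of `t^n`, so the truncated finite sum gives the honest coefficient. -/
noncomputable def fCoeff {K : Type*} [Field K] (z q : K) (n : ℕ) : K :=
  PowerSeries.coeff n (∑ j ∈ range (n+1), fTerm z q j)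

section RescaleProd

variable {R : Type*} [CommRing R]

theorem rescale_C (a c : R) : rescale a (C c) = C c := by
  ext n
  rcases n with _ | n <;> simp [coeff_rescale, coeff_C]

theorem rescale_prod_one_sub_X_pow_mul_C {ι : Type*} (a : R) (d : ℕ) (s : Finset ι) (g : ι → R) :
    rescale a (∏ k ∈ s, (1 - X ^ d * C (g k))) = ∏ k ∈ s, (1 - X ^ d * C (a ^ d * g k)) := by
  simp only [map_prod, map_sub, map_one, map_mul, map_pow, rescale_X, rescale_C]
  refine prod_congr rfl fun k _ => ?_
  ring

theorem prod_range_succ_one_sub_X_pow_mul_C {a : R} {d : ℕ} {g : ℕ → R}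
    (hg : ∀ k, g (k + 1) = a ^ d * g k) (m : ℕ) :
    ∏ k ∈ range (m + 1), (1 - X ^ d * C (g k))
      = (1 - X ^ d * C (g 0)) * rescale a (∏ k ∈ range m, (1 - X ^ d * C (g k))) := by
  rw [prod_range_succ', rescale_prod_one_sub_X_pow_mul_C, mul_comm]
  simp only [hg]

end RescaleProd

section Terms

variable {K : Type*} [Field K]

noncomputable def fTermNum (z q : K) (j : ℕ) : K⟦X⟧ :=
  X ^ (2*j) * (1 + X) * C (q ^ (2*j^2))
    * (∏ k ∈ range j, (1 - X * C (z * q ^ (2*k+1))))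
    * (∏ k ∈ range j, (1 - X * C (q ^ (2*k+1) / z)))

noncomputable def fTermDen (q : K) (j : ℕ) : K⟦X⟧ :=
  ∏ k ∈ range (2*j+1), (1 - X ^ 2 * C (q ^ (2*k)))

theorem constantCoeff_fTermDen (q : K) (j : ℕ) : constantCoeff (fTermDen q j) = 1 := by
  simp [fTermDen, map_prod]

theorem fTerm_mul_fTermDen (z q : K) (j : ℕ) : fTerm z q j * fTermDen q j = fTermNum z q j :=
  (eq_mul_inv_iff_mul_eq (by simp [constantCoeff_fTermDen])).1 rfl

theorem fTermDen_succ (q : K) (j : ℕ) :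
    fTermDen q (j+1) = (1 - X ^ 2) * (1 - X ^ 2 * C (q ^ 2)) * rescale (q ^ 2) (fTermDen q j) := by
  have hq : ∀ k, q ^ (2 * (k + 1 + 1)) = (q ^ 2) ^ 2 * q ^ (2 * k) := fun k => by ring
  rw [fTermDen, fTermDen, rescale_prod_one_sub_X_pow_mul_C,
    show 2 * (j + 1) + 1 = 2 * j + 1 + 1 + 1 by ring, prod_range_succ', prod_range_succ']
  simp only [hq, mul_zero, zero_add, mul_one, pow_zero, map_one]
  ring

theorem fTermNum_succ (z q : K) (j : ℕ) :
    (1 + X * C (q ^ 2)) * fTermNum z q (j+1)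
      = C (q ^ 2) * X ^ 2 * (1 + X) * (1 - X * C (z * q)) * (1 - X * C (q / z))
          * rescale (q ^ 2) (fTermNum z q j) := by
  have hg : ∀ k, z * q ^ (2 * (k + 1) + 1) = (q ^ 2) ^ 1 * (z * q ^ (2 * k + 1)) := fun k => by ring
  have hg' : ∀ k, q ^ (2 * (k + 1) + 1) / z = (q ^ 2) ^ 1 * (q ^ (2 * k + 1) / z) := fun k => by
    ring
  have h1 := prod_range_succ_one_sub_X_pow_mul_C (g := fun k => z * q ^ (2 * k + 1)) hg j
  have h2 := prod_range_succ_one_sub_X_pow_mul_C (g := fun k => q ^ (2 * k + 1) / z) hg' j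
  simp only [pow_one, mul_zero, zero_add] at h1 h2
  have hc : C (q ^ (2 * (j + 1) ^ 2))
      = C (q ^ 2) * C ((q ^ 2) ^ (2 * j)) * C (q ^ (2 * j ^ 2)) := by
    rw [← map_mul, ← map_mul]
    congr 1
    ring
  have hmono : rescale (q ^ 2) (X ^ (2 * j) * (1 + X) * C (q ^ (2 * j ^ 2)))
      = C ((q ^ 2) ^ (2 * j)) * X ^ (2 * j) * (1 + X * C (q ^ 2)) * C (q ^ (2 * j ^ 2)) := by
    simp only [map_mul, map_pow, map_add, map_one, rescale_X, rescale_C]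
    ring
  rw [fTermNum, fTermNum, h1, h2, map_mul (rescale _), map_mul (rescale _), hmono, hc]
  ring

theorem fTermDen_ne_zero (q : K) (j : ℕ) : fTermDen q j ≠ 0 := fun h => by
  simpa [h] using constantCoeff_fTermDen q j

theorem fTerm_zero (z q : K) : (1 - X) * fTerm z q 0 = 1 := by
  apply mul_right_cancel₀ (fTermDen_ne_zero q 0)
  rw [mul_assoc, fTerm_mul_fTermDen]
  simp only [fTermNum, fTermDen, mul_zero, pow_zero, one_mul, zero_pow two_ne_zero, map_one,
    mul_one, range_zero, prod_empty, zero_add, range_one, prod_singleton]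
  ring

theorem fTerm_succ (z q : K) (j : ℕ) :
    (1 - X) * (1 + X * C (q ^ 2)) * (1 - X ^ 2 * C (q ^ 2)) * fTerm z q (j + 1)
      = C (q ^ 2) * X ^ 2 * (1 - X * C (z * q)) * (1 - X * C (q / z))
          * rescale (q ^ 2) (fTerm z q j) := by
  apply mul_right_cancel₀ (fTermDen_ne_zero q (j + 1))
  have hrT := congrArg (rescale (q ^ 2)) (fTerm_mul_fTermDen z q j)
  rw [map_mul] at hrT
  linear_combination (1 - X) * (1 + X * C (q ^ 2)) * (1 - X ^ 2 * C (q ^ 2))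
      * fTerm_mul_fTermDen z q (j + 1) + (1 - X) * (1 - X ^ 2 * C (q ^ 2)) * fTermNum_succ z q j
    - C (q ^ 2) * X ^ 2 * (1 - X * C (z * q)) * (1 - X * C (q / z)) * rescale (q ^ 2) (fTerm z q j)
      * fTermDen_succ q j
    - C (q ^ 2) * X ^ 2 * (1 - X * C (z * q)) * (1 - X * C (q / z)) * (1 - X ^ 2)
      * (1 - X ^ 2 * C (q ^ 2)) * hrT

theorem coeff_fTerm_of_lt (z q : K) {m j : ℕ} (h : m < 2 * j) : coeff m (fTerm z q j) = 0 := by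
  refine X_pow_dvd_iff.1 ?_ m h
  unfold fTerm
  repeat apply dvd_mul_of_dvd_left
  exact dvd_rfl

noncomputable def fPartial (z q : K) (n : ℕ) : K⟦X⟧ := ∑ j ∈ range (n + 1), fTerm z q j

theorem coeff_fPartial_of_le (z q : K) {m M : ℕ} (h : m ≤ M) :
    coeff m (fPartial z q M) = fCoeff z q m := by
  rw [fCoeff, fPartial, map_sum, map_sum]
  exact (sum_subset (range_subset_range.2 (by omega))
    fun j _ hj => coeff_fTerm_of_lt z q (by rw [mem_range] at hj; omega)).symm

theorem fPartial_succ_functional_eq (z q : K) (n : ℕ) :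
    (1 - X) * (1 + X * C (q ^ 2)) * (1 - X ^ 2 * C (q ^ 2)) * fPartial z q (n + 1)
      = (1 + X * C (q ^ 2)) * (1 - X ^ 2 * C (q ^ 2))
        + C (q ^ 2) * X ^ 2 * (1 - X * C (z * q)) * (1 - X * C (q / z))
            * rescale (q ^ 2) (fPartial z q n) := by
  have h0 : (1 - X) * (1 + X * C (q ^ 2)) * (1 - X ^ 2 * C (q ^ 2)) * fTerm z q 0
      = (1 + X * C (q ^ 2)) * (1 - X ^ 2 * C (q ^ 2)) := by
    linear_combination (1 + X * C (q ^ 2)) * (1 - X ^ 2 * C (q ^ 2)) * fTerm_zero z q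
  rw [fPartial, sum_range_succ', mul_add, mul_sum, h0, add_comm, fPartial, map_sum, mul_sum]
  simp only [fTerm_succ]

theorem fCoeff_add_four (z q : K) (hz : z ≠ 0) (m : ℕ) :
    fCoeff z q (m + 4) + (q ^ 2 - 1) * fCoeff z q (m + 3) - 2 * q ^ 2 * fCoeff z q (m + 2)
        + (q ^ 2 - q ^ 4) * fCoeff z q (m + 1) + q ^ 4 * fCoeff z q m
      = q ^ 2 * (q ^ 2) ^ (m + 2) * fCoeff z q (m + 2)
        - q ^ 3 * (z + z⁻¹) * (q ^ 2) ^ (m + 1) * fCoeff z q (m + 1)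
        + q ^ 4 * (q ^ 2) ^ m * fCoeff z q m := by
  set F := fPartial z q (m + 4)
  set G := rescale (q ^ 2) (fPartial z q (m + 3))
  have hF : (1 - X) * (1 + X * C (q ^ 2)) * (1 - X ^ 2 * C (q ^ 2)) * F
      = F + X * (C (q ^ 2 - 1) * F + X * (C (-(2 * q ^ 2)) * F
          + X * (C (q ^ 2 - q ^ 4) * F + X * (C (q ^ 4) * F)))) := by
    simp only [map_sub, map_neg, map_mul, map_pow, map_one, map_ofNat]
    ring
  have hE : (1 + X * C (q ^ 2)) * (1 - X ^ 2 * C (q ^ 2))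
      = 1 + X * (C (q ^ 2) + X * (C (-q ^ 2) + X * C (-q ^ 4))) := by
    simp only [map_neg, map_pow]
    ring
  have hG : C (q ^ 2) * X ^ 2 * (1 - X * C (z * q)) * (1 - X * C (q / z)) * G
      = X * (X * (C (q ^ 2) * G + X * (C (-(q ^ 3 * (z + z⁻¹))) * G + X * (C (q ^ 4) * G)))) := by
    have hzz : C z * C z⁻¹ = (1 : K⟦X⟧) := by rw [← map_mul, mul_inv_cancel₀ hz, map_one]
    simp only [div_eq_mul_inv, map_mul, map_add, map_pow, map_neg]
    linear_combination X ^ 4 * C q ^ 4 * G * hzz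
  have h := congrArg (coeff (m + 4)) (fPartial_succ_functional_eq z q (m + 3))
  rw [hF, hE, hG] at h
  simp only [map_add, coeff_succ_X_mul, coeff_C_mul, coeff_one, coeff_C, coeff_rescale,
    Nat.add_eq_zero_iff, OfNat.ofNat_ne_zero, one_ne_zero, and_false, if_false, add_zero, F, G] at h
  simp (disch := omega) only [coeff_fPartial_of_le] at h
  linear_combination h

end Terms

/-- The coefficients `P_n(z,q)` of `f(t)` satisfy, for `n ≥ 4`, the fourth-order
recurrence
`P_n = (1-q²)P_{n-1} + (2q²+q^{2n-2})P_{n-2} + (q⁴-q²-(z+z⁻¹)q^{2n-3})P_{n-3}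
      + (q^{2n-4}-q⁴)P_{n-4}`. -/
theorem fCoeff_recurrence {K : Type*} [Field K] (z q : K) (hz : z ≠ 0)
    (n : ℕ) (hn : 4 ≤ n) :
    fCoeff z q n =
      (1 - q^2) * fCoeff z q (n-1) + (2*q^2 + q^(2*n-2)) * fCoeff z q (n-2)
        + (q^4 - q^2 - (z + z⁻¹) * q^(2*n-3)) * fCoeff z q (n-3)
        + (q^(2*n-4) - q^4) * fCoeff z q (n-4) := by
  obtain ⟨m, rfl⟩ : ∃ m, n = m + 4 := ⟨n - 4, by omega⟩
  have hpow : ∀ k l, 2 * (m + 4) - k = 2 * l + k → q ^ (2 * (m + 4) - k) = q ^ k * (q ^ 2) ^ l :=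
    fun k l h => by rw [h, pow_add, pow_mul, mul_comm]
  rw [hpow 2 (m + 2) (by omega), hpow 3 (m + 1) (by omega), hpow 4 m (by omega)]
  simp only [Nat.reduceSubDiff, Nat.add_sub_cancel]
  linear_combination fCoeff_add_four z q hz m
end

section
/- The sequence Q_n(z,q) defined by Q_n := ∑_{j∈ℤ} (-1)^j z^j q^{3j²} qbinom(n-1, ⌊(n+3j-1)/2⌋; q²) + ε_n(z,q) (with ε_n as in Identity 1) satisfies, for all n ≥ 4, the recurrence Q_n = (1-q²)Q_{n-1} + (2q² + q^{2n-2})Q_{n-2} + (q⁴ - q² - (z+z⁻¹)q^{2n-3})Q_{n-3} + (q^{2n-4} - q⁴)Q_{n-4}. -/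
open Finset

/-- The Gaussian binomial coefficient `[n choose k]_q`. -/
def gb {K : Type*} [CommRing K] (q : K) : ℕ → ℕ → K
  | _, 0 => 1
  | 0, _+1 => 0
  | n+1, k+1 => gb q n k + q ^ (k+1) * gb q n (k+1)

/-- The Gaussian binomial coefficient with integer arguments: it vanishes
unless `0 ≤ B ≤ A`. -/
def gbZ {K : Type*} [CommRing K] (q : K) (A B : ℤ) : K :=
  if 0 ≤ B ∧ B ≤ A then gb q A.toNat B.toNat else 0

/-- The modified Gaussian binomial coefficient: equals `1` when `A = -1` and
`B = 0`, and the ordinary Gaussian binomial coefficient otherwise. -/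
def gbS {K : Type*} [CommRing K] (q : K) (A B : ℤ) : K :=
  if A = -1 ∧ B = 0 then 1 else gbZ q A B

/-- The correction term `ε_n(z,q)` of McLaughlin–Sills Identity 1. -/
noncomputable def eps1 {K : Type*} [Field K] (z q : K) (n : ℕ) : K :=
  if Even n then
    ∑ j ∈ Icc (-(n : ℤ) - 1) ((n : ℤ) + 1),
      z ^ (2*j) * q ^ (12*j^2 + 6*j + (n : ℤ)) * gbS (q^2) ((n : ℤ) - 1) (((n : ℤ) + 6*j)/2)
  else
    - ∑ j ∈ Icc (-(n : ℤ) - 1) ((n : ℤ) + 1),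
      z ^ (2*j - 1) * q ^ (12*j^2 - 6*j + (n : ℤ)) * gbS (q^2) ((n : ℤ) - 1) (((n : ℤ) + 6*j - 3)/2)

/-- The right-hand side `Q_n(z,q)` of McLaughlin–Sills Identity 1:
`∑_{j∈ℤ} (-1)^j z^j q^{3j²} [n-1, ⌊(n+3j-1)/2⌋]_{q²} + ε_n(z,q)`.
All integer sums are finitely supported, so summing `j` over `[-n-1, n+1]`
captures every nonzero term. -/
noncomputable def Q1 {K : Type*} [Field K] (z q : K) (n : ℕ) : K :=
  (∑ j ∈ Icc (-(n : ℤ) - 1) ((n : ℤ) + 1),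
    (-1 : K) ^ j * z ^ j * q ^ (3*j^2) * gbZ (q^2) ((n : ℤ) - 1) (Int.fdiv ((n : ℤ) + 3*j - 1) 2))
  + eps1 z q n

/-- The left-hand side `S_n(z,q)` of McLaughlin–Sills Identity 1. -/
noncomputable def S1 {K : Type*} [Field K] (z q : K) (n : ℕ) : K :=
  ∑ j ∈ range (n/2 + 1), ∑ h ∈ range (j+1), ∑ i ∈ range (j+1),
    (-1 : K)^(h+i) * z^((h : ℤ) - (i : ℤ)) * q^(h^2 + i^2 + 2*j^2)
      * gb (q^2) j h * gb (q^2) j i * gb (q^2) (j + (n - h - i)/2) (2*j)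

/-! Split the main sum of `Q_n` by the parity of `n + k` and write `ε_n` as a sum of the same
shape; together with one auxiliary sum, the two q-Pascal rules turn these sums into a first-order
linear system in `n` whose coefficients are monomials in `z^{±1}, q^{±1}, q^{2n}`. Iterating it
four times and eliminating gives the fourth-order recurrence for the total `Q_n` of the first
three components. The system is valid from level `1` on; at `n = 4` one runs it from a fictitious
level-`0` state whose total is `Q_0 = 1`. -/

section GaussianBinomial

variable {R : Type*} [CommRing R] (p : R)

theorem gb_zero_right (n : ℕ) : gb p n 0 = 1 := by
  cases n <;> rfl

theorem gb_succ_succ (n k : ℕ) : gb p (n + 1) (k + 1) = gb p n k + p ^ (k + 1) * gb p n (k + 1) :=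
  rfl

theorem gb_eq_zero_of_lt : ∀ {n k : ℕ}, n < k → gb p n k = 0
  | 0, _ + 1, _ => rfl
  | n + 1, k + 1, h => by
    rw [gb_succ_succ, gb_eq_zero_of_lt (by omega), gb_eq_zero_of_lt (by omega), mul_zero, add_zero]

theorem gb_succ_succ' : ∀ n k : ℕ, gb p (n + 1) (k + 1) = p ^ (n - k) * gb p n k + gb p n (k + 1)
  | 0, k => by simp [gb_succ_succ, gb_eq_zero_of_lt p (Nat.succ_pos k)]
  | n + 1, 0 => by
    conv_lhs => rw [gb_succ_succ, gb_succ_succ' n 0]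
    conv_rhs => rw [gb_succ_succ p n 0]
    simp only [gb_zero_right, Nat.sub_zero]
    ring
  | n + 1, k + 1 => by
    conv_lhs => rw [gb_succ_succ, gb_succ_succ' n k, gb_succ_succ' n (k + 1)]
    conv_rhs => rw [Nat.add_sub_add_right, gb_succ_succ p n k, gb_succ_succ p n (k + 1)]
    rcases lt_or_ge n (k + 1) with hn | hn
    · rw [gb_eq_zero_of_lt p hn, gb_eq_zero_of_lt p (by omega : n < k + 1 + 1)]
      ring
    · have hexp : p ^ (k + 1 + 1) * p ^ (n - (k + 1)) = p ^ (n - k) * p ^ (k + 1) := by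
        rw [← pow_add, ← pow_add]; congr 1; omega
      linear_combination gb p n (k + 1) * hexp

theorem gbZ_natCast (n k : ℕ) : gbZ p n k = gb p n k := by
  rcases le_or_gt k n with h | h
  · simp [gbZ, h]
  · rw [gbZ, if_neg (by omega), gb_eq_zero_of_lt p h]

theorem gbZ_eq_zero {A B : ℤ} (h : B < 0 ∨ A < B) : gbZ p A B = 0 :=
  if_neg (by omega)

theorem support_mul_gbZ_subset (a : ℤ → R) (A : ℤ) (B : ℤ → ℤ) {s : Finset ℤ}
    (h : ∀ j, 0 ≤ B j → B j ≤ A → j ∈ s) :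
    Function.support (fun j => a j * gbZ p A (B j)) ⊆ s :=
  fun j hj => by_contra fun hs => hj <| mul_eq_zero_of_right _ <| gbZ_eq_zero p <| by
    by_contra! hB
    exact hs (h j hB.1 hB.2)

theorem gbZ_zero_right {A : ℤ} (hA : 0 ≤ A) : gbZ p A 0 = 1 := by
  simp [gbZ, hA, gb_zero_right]

end GaussianBinomial

section QPascal

variable {K : Type*} [Field K] (p : K)

theorem gbZ_pascal {A : ℤ} (B : ℤ) (hA : 1 ≤ A) :
    gbZ p A B = gbZ p (A - 1) (B - 1) + p ^ B * gbZ p (A - 1) B := by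
  obtain ⟨n, rfl⟩ : ∃ n : ℕ, A = n + 1 := ⟨(A - 1).toNat, by omega⟩
  rw [add_sub_cancel_right]
  rcases lt_trichotomy B 0 with hB | rfl | hB
  · rw [gbZ_eq_zero p (by omega), gbZ_eq_zero p (by omega), gbZ_eq_zero p (by omega)]; ring
  · rw [gbZ_zero_right p (by omega), gbZ_zero_right p (by omega), gbZ_eq_zero p (by omega)]; simp
  obtain ⟨k, rfl⟩ : ∃ k : ℕ, B = k + 1 := ⟨(B - 1).toNat, by omega⟩
  rw [add_sub_cancel_right, ← Nat.cast_succ n, ← Nat.cast_succ k]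
  simp only [gbZ_natCast, zpow_natCast, gb_succ_succ]

theorem gbZ_pascal' {A : ℤ} (B : ℤ) (hA : 1 ≤ A) :
    gbZ p A B = p ^ (A - B) * gbZ p (A - 1) (B - 1) + gbZ p (A - 1) B := by
  obtain ⟨n, rfl⟩ : ∃ n : ℕ, A = n + 1 := ⟨(A - 1).toNat, by omega⟩
  rw [add_sub_cancel_right]
  rcases lt_trichotomy B 0 with hB | rfl | hB
  · rw [gbZ_eq_zero p (by omega), gbZ_eq_zero p (by omega), gbZ_eq_zero p (by omega)]; ring
  · rw [gbZ_zero_right p (by omega), gbZ_zero_right p (by omega), gbZ_eq_zero p (by omega)]; ring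
  obtain ⟨k, rfl⟩ : ∃ k : ℕ, B = k + 1 := ⟨(B - 1).toNat, by omega⟩
  rcases le_or_gt k n with hk | hk
  · rw [add_sub_cancel_right, add_sub_add_right_eq_sub, ← Int.natCast_sub hk, zpow_natCast,
      ← Nat.cast_succ n, ← Nat.cast_succ k]
    simp only [gbZ_natCast, gb_succ_succ']
  · rw [gbZ_eq_zero p (by omega), gbZ_eq_zero p (by omega), gbZ_eq_zero p (by omega)]; ring

end QPascal

section Finsum

theorem finsum_comp_sub_right {G M : Type*} [AddGroup G] [AddCommMonoid M] (f : G → M) (s : G) :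
    ∑ᶠ j, f (j - s) = ∑ᶠ j, f j :=
  finsum_comp_equiv (Equiv.subRight s)

theorem finsum_int_odd_add_even {M : Type*} [AddCommMonoid M] {f : ℤ → M}
    (hf : Function.HasFiniteSupport f) (c : ℤ) :
    ∑ᶠ j, f (2 * j + 1 - c) + ∑ᶠ j, f (2 * j - c) = ∑ᶠ k, f k := by
  have hf' : Function.HasFiniteSupport fun k => f (k - c) :=
    hf.fun_comp_of_injective sub_left_injective
  have hcover : Set.range (fun j : ℤ => 2 * j + 1) ∪ Set.range (2 * ·) = Set.univ := by
    ext k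
    obtain ⟨j, rfl | rfl⟩ := Int.even_or_odd' k <;> simp
  have hdisj : Disjoint (Set.range fun j : ℤ => 2 * j + 1) (Set.range (2 * ·)) := by
    rw [Set.disjoint_left]
    rintro _ ⟨a, rfl⟩ ⟨b, hb⟩
    dsimp only at hb
    omega
  calc ∑ᶠ j, f (2 * j + 1 - c) + ∑ᶠ j, f (2 * j - c)
      = ∑ᶠ k ∈ Set.range (fun j : ℤ => 2 * j + 1) ∪ Set.range (2 * ·), f (k - c) := by
        rw [finsum_mem_union' hdisj (hf'.subset Set.inter_subset_right)
            (hf'.subset Set.inter_subset_right),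
          finsum_mem_range (fun a b h => by simpa using h),
          finsum_mem_range (fun a b h => by simpa using h)]
    _ = ∑ᶠ k, f k := by rw [hcover, finsum_mem_univ, finsum_comp_sub_right]

theorem finsum_mul_comp_sub_add_mul_comp_sub {G R : Type*} [AddGroup G] [Semiring R]
    [NoZeroDivisors R] {f g : G → R} (hf : Function.HasFiniteSupport f)
    (hg : Function.HasFiniteSupport g) (a b : R) (s t : G) :
    ∑ᶠ j, (a * f (j - s) + b * g (j - t)) = a * ∑ᶠ j, f j + b * ∑ᶠ j, g j := by
  rw [finsum_add_distrib, ← mul_finsum, ← mul_finsum, finsum_comp_sub_right f,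
    finsum_comp_sub_right g]
  · exact (hf.fun_comp_of_injective sub_left_injective).fun_mul_right _
  · exact (hg.fun_comp_of_injective sub_left_injective).fun_mul_right _

end Finsum

namespace Q1

variable {K : Type*} [Field K] (z q : K)

def monomial (b c : ℤ) : K := (-z) ^ b * q ^ c

/- With `k = 2 * j + 1 - m` in `xTerm`, `fTerm` and `k = 2 * j - m` in `yTerm`, `eTerm`:
`xTerm` and `yTerm` are the summands `(-z)^k q^(3k²) [m-1, ⌊(m+3k-1)/2⌋]_{q²}` of the main sum of
`Q1 z q m` with `m + k` odd and even, `eTerm` is the summand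
`(-z)^k q^(3k²+3k+m) [m-1, (m+3k)/2]_{q²}` of `eps1 z q m`, and `fTerm` is its companion with
`m + k` odd. -/
def xTerm (m : ℕ) (j : ℤ) : K :=
  monomial z q (2 * j + 1 - m) (3 * (2 * j + 1 - m) ^ 2) * gbZ (q ^ 2) (m - 1) (3 * j + 1 - m)

def yTerm (m : ℕ) (j : ℤ) : K :=
  monomial z q (2 * j - m) (3 * (2 * j - m) ^ 2) * gbZ (q ^ 2) (m - 1) (3 * j - 1 - m)

def eTerm (m : ℕ) (j : ℤ) : K :=
  monomial z q (2 * j - m) (3 * (2 * j - m) ^ 2 + 3 * (2 * j - m) + m) *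
    gbZ (q ^ 2) (m - 1) (3 * j - m)

def fTerm (m : ℕ) (j : ℤ) : K :=
  monomial z q (2 * j + 1 - m) (3 * (2 * j + 1 - m) ^ 2 + 3 * (2 * j + 1 - m) + m) *
    gbZ (q ^ 2) (m - 1) (3 * j + 1 - m)

structure State (K : Type*) where
  (x y e f : K)

def State.total (s : State K) : K := s.x + s.y + s.e

-- One step from level `m` to level `m + 1`, where `v = q ^ (2 * m)`.
def State.step (v : K) (s : State K) : State K :=
  ⟨s.y + s.e, s.x - z * q * s.e, q * s.f - z⁻¹ * q⁻¹ * v * s.y, q * v * s.y + q * s.e⟩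

def run : K → ℕ → State K → State K
  | _, 0, s => s
  | v, i + 1, s => run (q ^ 2 * v) i (s.step z q v)

noncomputable def stateAt (m : ℕ) : State K :=
  ⟨∑ᶠ j, xTerm z q m j, ∑ᶠ j, yTerm z q m j, ∑ᶠ j, eTerm z q m j, ∑ᶠ j, fTerm z q m j⟩

variable {z q}

theorem total_run_four (hz : z ≠ 0) (hq : q ≠ 0) (v : K) (s : State K) :
    (run z q v 4 s).total = (1 - q ^ 2) * (run z q v 3 s).total
      + (2 * q ^ 2 + q ^ 6 * v) * (run z q v 2 s).total
      + (q ^ 4 - q ^ 2 - (z + z⁻¹) * q ^ 5 * v) * (run z q v 1 s).total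
      + (q ^ 4 * v - q ^ 4) * s.total := by
  simp only [run, State.step, State.total]
  field_simp
  ring

theorem monomial_add (hz : z ≠ 0) (hq : q ≠ 0) (b b' c c' : ℤ) :
    monomial z q (b + b') (c + c') = monomial z q b c * monomial z q b' c' := by
  simp only [monomial, zpow_add₀ hq, zpow_add₀ (neg_ne_zero.2 hz)]
  ring

theorem sq_zpow_eq_monomial (B : ℤ) : (q ^ 2) ^ B = monomial z q 0 (2 * B) := by
  rw [monomial, zpow_zero, one_mul, zpow_mul, zpow_two, sq]

theorem neg_one_zpow_mul_zpow_mul_zpow (k c : ℤ) :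
    (-1) ^ k * z ^ k * q ^ c = monomial z q k c := by
  rw [monomial, ← mul_zpow, neg_one_mul]

variable (z q) in
theorem hasFiniteSupport_terms (m : ℕ) :
    (xTerm z q m).HasFiniteSupport ∧ (yTerm z q m).HasFiniteSupport ∧
      (eTerm z q m).HasFiniteSupport ∧ (fTerm z q m).HasFiniteSupport := by
  have hfin := (Finset.Icc (-(m : ℤ)) m).finite_toSet
  refine ⟨hfin.subset ?_, hfin.subset ?_, hfin.subset ?_, hfin.subset ?_⟩ <;>
    exact support_mul_gbZ_subset _ _ _ _ fun j _ _ => Finset.mem_Icc.2 ⟨by omega, by omega⟩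

section Steps

variable {m : ℕ} (j : ℤ)

theorem xTerm_succ (hz : z ≠ 0) (hq : q ≠ 0) (hm : 1 ≤ m) :
    xTerm z q (m + 1) j = yTerm z q m j + eTerm z q m j := by
  rw [xTerm, gbZ_pascal _ _ (by omega), sq_zpow_eq_monomial (z := z), yTerm, eTerm]
  simp only [mul_add, ← mul_assoc, ← monomial_add hz hq]
  push_cast
  ring_nf

theorem yTerm_succ (hz : z ≠ 0) (hq : q ≠ 0) (hm : 1 ≤ m) :
    yTerm z q (m + 1) j = xTerm z q m (j - 1) + monomial z q 1 1 * eTerm z q m (j - 1) := by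
  rw [yTerm, gbZ_pascal' _ _ (by omega), sq_zpow_eq_monomial (z := z), xTerm, eTerm]
  simp only [mul_add, ← mul_assoc, ← monomial_add hz hq]
  push_cast
  ring_nf

theorem eTerm_succ (hz : z ≠ 0) (hq : q ≠ 0) (hm : 1 ≤ m) : eTerm z q (m + 1) j =
    monomial z q 0 1 * fTerm z q m (j - 1) + monomial z q (-1) (2 * m - 1) * yTerm z q m j := by
  rw [eTerm, gbZ_pascal _ _ (by omega), sq_zpow_eq_monomial (z := z), fTerm, yTerm]
  simp only [mul_add, ← mul_assoc, ← monomial_add hz hq]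
  push_cast
  ring_nf

theorem fTerm_succ (hz : z ≠ 0) (hq : q ≠ 0) (hm : 1 ≤ m) : fTerm z q (m + 1) j =
    monomial z q 0 (2 * m + 1) * yTerm z q m j + monomial z q 0 1 * eTerm z q m j := by
  rw [fTerm, gbZ_pascal' _ _ (by omega), sq_zpow_eq_monomial (z := z), yTerm, eTerm]
  simp only [mul_add, ← mul_assoc, ← monomial_add hz hq]
  push_cast
  ring_nf

end Steps

theorem stateAt_succ (hz : z ≠ 0) (hq : q ≠ 0) {m : ℕ} (hm : 1 ≤ m) :
    stateAt z q (m + 1) = (stateAt z q m).step z q (q ^ (2 * m)) := by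
  obtain ⟨hx, hy, he, hf⟩ := hasFiniteSupport_terms z q m
  have hpow : q ^ (2 * (m : ℤ)) = q ^ (2 * m) := by
    rw [show 2 * (m : ℤ) = ((2 * m : ℕ) : ℤ) by push_cast; ring, zpow_natCast]
  have h01 : monomial z q 0 1 = q := by simp [monomial]
  have h11 : monomial z q 1 1 = -(z * q) := by simp [monomial]
  have hy' : monomial z q (-1) (2 * m - 1) = -(z⁻¹ * q⁻¹ * q ^ (2 * m)) := by
    rw [monomial, zpow_sub₀ hq, zpow_neg_one, hpow]; field_simp
  have hf' : monomial z q 0 (2 * m + 1) = q * q ^ (2 * m) := by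
    rw [monomial, zpow_add₀ hq, hpow]; simp [mul_comm]
  simp only [stateAt, State.step, State.mk.injEq]
  refine ⟨?_, ?_, ?_, ?_⟩
  · have h := finsum_mul_comp_sub_add_mul_comp_sub hy he 1 1 0 0
    simp only [one_mul, sub_zero] at h
    rw [finsum_congr (xTerm_succ · hz hq hm), h]
  · have h := finsum_mul_comp_sub_add_mul_comp_sub hx he 1 (monomial z q 1 1) 1 1
    simp only [one_mul] at h
    rw [finsum_congr (yTerm_succ · hz hq hm), h, h11]
    ring
  · have h := finsum_mul_comp_sub_add_mul_comp_sub hf hy (monomial z q 0 1)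
      (monomial z q (-1) (2 * m - 1)) 1 0
    simp only [sub_zero] at h
    rw [finsum_congr (eTerm_succ · hz hq hm), h, h01, hy']
    ring
  · have h := finsum_mul_comp_sub_add_mul_comp_sub hy he (monomial z q 0 (2 * m + 1))
      (monomial z q 0 1) 0 0
    simp only [sub_zero] at h
    rw [finsum_congr (fTerm_succ · hz hq hm), h, h01, hf']

theorem stateAt_add (hz : z ≠ 0) (hq : q ≠ 0) {m : ℕ} (hm : 1 ≤ m) (i : ℕ) :
    stateAt z q (m + i) = run z q (q ^ (2 * m)) i (stateAt z q m) := by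
  induction i generalizing m with
  | zero => rfl
  | succ i ih =>
    rw [show m + (i + 1) = m + 1 + i by omega, ih (by omega), run, ← stateAt_succ hz hq hm,
      show q ^ 2 * q ^ (2 * m) = q ^ (2 * (m + 1)) by ring]

theorem stateAt_one : stateAt z q 1 = ⟨1, 0, 0, q⟩ := by
  have hG (B : ℤ) : gbZ (q ^ 2) ((1 : ℕ) - 1) B = if B = 0 then 1 else 0 := by
    split_ifs with h
    · rw [h, gbZ_zero_right _ (by norm_num)]
    · exact gbZ_eq_zero _ (by omega)
  simp only [stateAt, xTerm, yTerm, eTerm, fTerm, hG, mul_ite, mul_one, mul_zero]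
  congr 1
  · rw [finsum_eq_single _ 0 (fun j hj => if_neg (by omega))]; simp [monomial]
  · exact finsum_eq_zero_of_forall_eq_zero fun j => if_neg (by omega)
  · exact finsum_eq_zero_of_forall_eq_zero fun j => if_neg (by omega)
  · rw [finsum_eq_single _ 0 (fun j hj => if_neg (by omega))]; simp [monomial]

end Q1

section

open Q1

variable {K : Type*} [Field K] {z q : K}

theorem sum_Icc_eq_finsum_xTerm_add_finsum_yTerm (n : ℕ) :
    ∑ k ∈ Finset.Icc (-(n : ℤ) - 1) (n + 1), (-1 : K) ^ k * z ^ k * q ^ (3 * k ^ 2) *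
        gbZ (q ^ 2) ((n : ℤ) - 1) (Int.fdiv ((n : ℤ) + 3 * k - 1) 2) =
      ∑ᶠ j, xTerm z q n j + ∑ᶠ j, yTerm z q n j := by
  have hsupp := support_mul_gbZ_subset (q ^ 2)
    (fun k : ℤ => (-1 : K) ^ k * z ^ k * q ^ (3 * k ^ 2)) ((n : ℤ) - 1)
    (fun k => Int.fdiv ((n : ℤ) + 3 * k - 1) 2) (s := Finset.Icc (-(n : ℤ) - 1) (n + 1))
    fun k h₀ h₁ => by
      rw [Int.fdiv_eq_ediv_of_nonneg _ zero_le_two] at h₀ h₁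
      exact Finset.mem_Icc.2 ⟨by omega, by omega⟩
  rw [← finsum_eq_sum_of_support_subset _ hsupp,
    ← finsum_int_odd_add_even ((Finset.finite_toSet _).subset hsupp) n]
  congr 1 <;> refine finsum_congr fun j => ?_ <;>
    rw [neg_one_zpow_mul_zpow_mul_zpow, Int.fdiv_eq_ediv_of_nonneg _ zero_le_two]
  · rw [xTerm]; congr 2; omega
  · rw [yTerm]; congr 2; omega

theorem eps1_eq_finsum_eTerm {n : ℕ} (hn : 1 ≤ n) : eps1 z q n = ∑ᶠ j, eTerm z q n j := by
  have hsupp : Function.support (fun j => eTerm z q n (j + n / 2)) ⊆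
      Finset.Icc (-(n : ℤ) - 1) (n + 1) :=
    support_mul_gbZ_subset _ _ _ _ fun j _ _ => Finset.mem_Icc.2 ⟨by omega, by omega⟩
  rw [← finsum_comp_equiv (Equiv.addRight ((n : ℤ) / 2)), Equiv.coe_addRight,
    finsum_eq_sum_of_support_subset _ hsupp, eps1]
  have hgbS (B : ℤ) : gbS (q ^ 2) ((n : ℤ) - 1) B = gbZ (q ^ 2) ((n : ℤ) - 1) B :=
    if_neg (by omega)
  split_ifs with h
  · obtain ⟨r, hr⟩ : ∃ r : ℤ, (n : ℤ) = 2 * r := ⟨n / 2, by rw [Nat.even_iff] at h; omega⟩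
    refine Finset.sum_congr rfl fun j _ => ?_
    rw [hgbS, eTerm, monomial, hr, show 2 * r / 2 = r by omega,
      show 2 * (j + r) - 2 * r = 2 * j by ring,
      show (2 * r + 6 * j) / 2 = 3 * (j + r) - 2 * r by omega, Even.neg_zpow (even_two_mul j)]
    ring_nf
  · obtain ⟨r, hr⟩ : ∃ r : ℤ, (n : ℤ) = 2 * r + 1 := ⟨n / 2, by rw [Nat.not_even_iff] at h; omega⟩
    rw [← Finset.sum_neg_distrib]
    refine Finset.sum_congr rfl fun j _ => ?_
    rw [hgbS, eTerm, monomial, hr, show (2 * r + 1) / 2 = r by omega,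
      show 2 * (j + r) - (2 * r + 1) = 2 * j - 1 by ring,
      show (2 * r + 1 + 6 * j - 3) / 2 = 3 * (j + r) - (2 * r + 1) by omega,
      Odd.neg_zpow ⟨j - 1, by ring⟩]
    ring_nf

theorem Q1_eq_total {n : ℕ} (hn : 1 ≤ n) : Q1 z q n = (stateAt z q n).total := by
  rw [Q1, sum_Icc_eq_finsum_xTerm_add_finsum_yTerm, eps1_eq_finsum_eTerm hn]
  rfl

theorem Q1_zero : Q1 z q 0 = 1 := by
  rw [Q1, eps1, if_pos Even.zero,
    Finset.sum_eq_zero fun k _ => by rw [gbZ_eq_zero _ (by omega), mul_zero], zero_add,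
    Finset.sum_eq_single 0 (fun j _ hj => by rw [gbS, if_neg (by omega), gbZ_eq_zero _ (by omega),
      mul_zero]) (by simp)]
  simp [gbS]

theorem exists_Q1_eq_total_run (hz : z ≠ 0) (hq : q ≠ 0) (m : ℕ) :
    ∃ s : State K, ∀ i, Q1 z q (m + i) = (run z q (q ^ (2 * m)) i s).total := by
  rcases Nat.eq_zero_or_pos m with rfl | hm
  · refine ⟨⟨0, 1, 0, z⁻¹ * q⁻¹ ^ 2⟩, fun i => ?_⟩
    rcases i with _ | i
    · simp [Q1_zero, run, State.total]
    have hpred : State.step z q 1 ⟨0, 1, 0, z⁻¹ * q⁻¹ ^ 2⟩ = stateAt z q 1 := by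
      rw [stateAt_one, State.step, State.mk.injEq]
      refine ⟨by ring, by ring, by field_simp; ring, by ring⟩
    rw [zero_add, Q1_eq_total (by omega), run, mul_zero, pow_zero, hpred, mul_one,
      ← stateAt_add hz hq le_rfl, add_comm]
  · exact ⟨stateAt z q m, fun i => by rw [Q1_eq_total (by omega), stateAt_add hz hq hm]⟩

end

/-- The right-hand side `Q_n(z,q)` of McLaughlin–Sills Identity 1 satisfies,
for `n ≥ 4`, the recurrence
`Q_n = (1-q²)Q_{n-1} + (2q²+q^{2n-2})Q_{n-2} + (q⁴-q²-(z+z⁻¹)q^{2n-3})Q_{n-3}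
      + (q^{2n-4}-q⁴)Q_{n-4}`. -/
theorem Q1_recurrence {K : Type*} [Field K] (z q : K) (hz : z ≠ 0) (hq : q ≠ 0)
    (n : ℕ) (hn : 4 ≤ n) :
    Q1 z q n =
      (1 - q^2) * Q1 z q (n-1) + (2*q^2 + q^(2*n-2)) * Q1 z q (n-2)
        + (q^4 - q^2 - (z + z⁻¹) * q^(2*n-3)) * Q1 z q (n-3)
        + (q^(2*n-4) - q^4) * Q1 z q (n-4) := by
  obtain ⟨m, rfl⟩ : ∃ m, n = m + 4 := ⟨n - 4, by omega⟩
  obtain ⟨s, hs⟩ := exists_Q1_eq_total_run hz hq m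
  have key := Q1.total_run_four hz hq (q ^ (2 * m)) s
  rw [← hs 4, ← hs 3, ← hs 2, ← hs 1, ← show Q1 z q m = s.total from hs 0] at key
  rw [show m + 4 - 1 = m + 3 from rfl, show m + 4 - 2 = m + 2 from rfl,
    show m + 4 - 3 = m + 1 from rfl, show m + 4 - 4 = m from rfl,
    show 2 * (m + 4) - 2 = 2 * m + 6 by omega, show 2 * (m + 4) - 3 = 2 * m + 5 by omega,
    show 2 * (m + 4) - 4 = 2 * m + 4 by omega]
  linear_combination key
end
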